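/- An inverse sequence of groups in which every bonding map is injective but not surjective is not semistable; that is, it is not pro-isomorphic to any tower of groups all of whose bonding maps are surjective. -/
import Mathlib


universe u v

/-- An inverse sequence (tower) of groups: groups `G 0, G 1, G 2, …` together with
bonding homomorphisms `f i : G (i+1) →* G i`. -/
structure GroupTower : Type (u + 1) where
  G : ℕ → Type u
  [grp : ∀ i, Group (G i)]
  f : ∀ i, G (i + 1) →* G i

attribute [instance] GroupTower.grp

/-- The composite bonding homomorphism `G j →* G i` for `i ≤ j`. -/
def GroupTower.bond (T : GroupTower.{u}) {i j : ℕ} (h : i ≤ j) : T.G j →* T.G i :=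
  Nat.leRecOn (C := fun k => T.G k →* T.G i) h (fun {k} g => g.comp (T.f k))
    (MonoidHom.id (T.G i))

/-- Pro-isomorphism of towers of groups: there are strictly increasing index sequences
`I` and `J` and homomorphisms `uu k : S.G (J k) →* T.G (I k)` and
`dd k : T.G (I (k+1)) →* S.G (J k)` forming a commuting ladder diagram. -/
def ProIsomorphic (T : GroupTower.{u}) (S : GroupTower.{v}) : Prop :=
  ∃ (I J : ℕ → ℕ) (hI : StrictMono I) (hJ : StrictMono J)
    (uu : ∀ k, S.G (J k) →* T.G (I k)) (dd : ∀ k, T.G (I (k + 1)) →* S.G (J k)),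
    (∀ k, (uu k).comp (dd k) = T.bond (hI (Nat.lt_succ_self k)).le) ∧
    (∀ k, (dd k).comp (uu (k + 1)) = S.bond (hJ (Nat.lt_succ_self k)).le)

lemma GroupTower.bond_self (T : GroupTower.{u}) {i : ℕ} (h : i ≤ i) :
    T.bond h = MonoidHom.id (T.G i) := Nat.leRecOn_self _

lemma GroupTower.bond_succ (T : GroupTower.{u}) {i j : ℕ} (h : i ≤ j) (h' : i ≤ j + 1) :
    T.bond h' = (T.bond h).comp (T.f j) := Nat.leRecOn_succ h _

lemma GroupTower.bond_injective (T : GroupTower.{u})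
    (hinj : ∀ i, Function.Injective (T.f i)) {i j : ℕ} (h : i ≤ j) :
    Function.Injective (T.bond h) := by
  induction j, h using Nat.le_induction with
  | base => rw [T.bond_self]; exact fun a b hab => hab
  | succ j hij ih =>
    rw [T.bond_succ hij]
    exact ih.comp (hinj j)

lemma GroupTower.bond_not_surjective (T : GroupTower.{u})
    (hnsurj : ∀ i, ¬ Function.Surjective (T.f i)) {i j : ℕ} (hij : i < j) (h : i ≤ j) :
    ¬ Function.Surjective (T.bond h) := by
  induction j, hij using Nat.le_induction with
  | base =>
    rw [T.bond_succ le_rfl, T.bond_self]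
    simpa using hnsurj i
  | succ j hij ih =>
    rw [T.bond_succ (Nat.le_of_succ_le hij)]
    intro hs
    rw [MonoidHom.coe_comp] at hs
    exact ih (Nat.le_of_succ_le hij) hs.of_comp

lemma GroupTower.bond_surjective (S : GroupTower.{v})
    (hsurj : ∀ i, Function.Surjective (S.f i)) {i j : ℕ} (h : i ≤ j) :
    Function.Surjective (S.bond h) := by
  induction j, h using Nat.le_induction with
  | base => rw [S.bond_self]; exact fun a => ⟨a, rfl⟩
  | succ j hij ih =>
    rw [S.bond_succ hij]
    exact ih.comp (hsurj j)

/-- An inverse sequence of groups in which every bonding map is injective but not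
surjective is not semistable: it is not pro-isomorphic to any tower of groups all of
whose bonding maps are surjective. -/
theorem not_semistable_of_injective_not_surjective (T : GroupTower.{u})
    (hinj : ∀ i, Function.Injective (T.f i))
    (hnsurj : ∀ i, ¬ Function.Surjective (T.f i)) :
    ¬ ∃ S : GroupTower.{v}, (∀ i, Function.Surjective (S.f i)) ∧ ProIsomorphic T S := by
  rintro ⟨S, hsurj, I, J, hI, hJ, uu, dd, hud, hdu⟩
  -- `dd 0` is injective since `uu 0 ∘ dd 0 = T.bond` is injective
  have hdd0inj : Function.Injective (dd 0) := by
    have : Function.Injective ((uu 0).comp (dd 0)) := by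
      rw [hud 0]; exact T.bond_injective hinj _
    exact fun a b hab => this (by simp [MonoidHom.comp_apply, hab])
  -- `dd k ∘ uu (k+1) = S.bond` is surjective
  have hddu : ∀ k, Function.Surjective ((dd k).comp (uu (k + 1))) := by
    intro k
    rw [hdu k]
    exact S.bond_surjective hsurj _
  -- hence `uu 1` is surjective
  have huu1 : Function.Surjective (uu 1) := by
    intro y
    obtain ⟨x, hx⟩ := hddu 0 (dd 0 y)
    exact ⟨x, hdd0inj hx⟩
  -- and `dd 1` is surjective
  have hdd1 : Function.Surjective (dd 1) := by
    have h := hddu 1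
    rw [MonoidHom.coe_comp] at h
    exact h.of_comp
  -- so `T.bond : T.G (I 2) →* T.G (I 1)` is surjective, contradiction
  have : Function.Surjective (T.bond (hI (Nat.lt_succ_self 1)).le) := by
    rw [← hud 1]
    exact huu1.comp hdd1
  exact T.bond_not_surjective hnsurj (hI (Nat.lt_succ_self 1)) _ this
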